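/- arXiv:1711.03193 — 7 statements merged into one kernel-verified Lean document; each statement's English description precedes it below -/
import Mathlib

section
/- Let (G, μ) be a probability measure space, let V be a finite set, let e : G → Finset V be a map such that for every v ∈ V the set {g ∈ G : v ∈ e(g)} is measurable, and let ρ₀ > 0 satisfy μ({g ∈ G : v ∈ e(g)}) ≥ ρ₀ for every v ∈ V. Then the hypergraph with vertex set V and edge set {e(g) : g ∈ G} admits a fractional covering of total weight at most 1/ρ₀; in particular its fractional covering number τ* is at most 1/ρ₀. -/
open MeasureTheory

/-- If `(G, μ)` is a probability measure space, `V` a finite set, `e : G → Finset V`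
with measurable fibers `{g : v ∈ e(g)}`, and `μ({g : v ∈ e(g)}) ≥ ρ₀ > 0` for every
vertex `v`, then the hypergraph with vertex set `V` and edge set `{e(g) : g ∈ G}`
admits a fractional covering of total weight at most `1/ρ₀`. -/
theorem fractional_cover_of_measure {G : Type*} [MeasurableSpace G]
    (μ : Measure G) [IsProbabilityMeasure μ]
    {V : Type*} [Fintype V] [DecidableEq V]
    (e : G → Finset V)
    (hmeas : ∀ v : V, MeasurableSet {g : G | v ∈ e g})
    (ρ₀ : ℝ) (hρ₀ : 0 < ρ₀)
    (hlb : ∀ v : V, ENNReal.ofReal ρ₀ ≤ μ {g : G | v ∈ e g}) :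
    ∃ ν : Finset V → ℝ,
      (∀ F, 0 ≤ ν F) ∧
      (∀ F, F ∉ Set.range e → ν F = 0) ∧
      (∀ v : V, 1 ≤ ∑ F ∈ Finset.univ.filter (fun F : Finset V => v ∈ F), ν F) ∧
      ∑ F : Finset V, ν F ≤ 1 / ρ₀ := by
  classical
  set S : Finset V → Set G := fun F => {g | e g = F} with hS
  have hSmeas : ∀ F, MeasurableSet (S F) := by
    intro F
    have h1 : S F = ⋂ v : V, {g : G | v ∈ e g ↔ v ∈ F} := by
      ext g; simp [S, Finset.ext_iff]
    rw [h1]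
    refine MeasurableSet.iInter fun v => ?_
    by_cases hv : v ∈ F
    · have h2 : {g : G | v ∈ e g ↔ v ∈ F} = {g | v ∈ e g} := by ext g; simp [hv]
      rw [h2]; exact hmeas v
    · have h2 : {g : G | v ∈ e g ↔ v ∈ F} = {g | v ∈ e g}ᶜ := by ext g; simp [hv]
      rw [h2]; exact (hmeas v).compl
  have hfin : ∀ F, μ (S F) ≠ ⊤ := fun F => measure_ne_top μ _
  have hdisj : ∀ s : Finset (Finset V),
      (s : Set (Finset V)).PairwiseDisjoint S := by
    intro s F _ F' _ hne
    simp only [Function.onFun, Set.disjoint_left]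
    intro g hg hg'
    exact hne (hg.symm.trans hg')
  refine ⟨fun F => (μ (S F)).toReal / ρ₀, ?_, ?_, ?_, ?_⟩
  · intro F; positivity
  · intro F hF
    have h0 : S F = ∅ := by
      ext g
      simp only [S, Set.mem_setOf_eq, Set.mem_empty_iff_false, iff_false]
      intro h; exact hF ⟨g, h⟩
    simp [S] at h0 ⊢
    simp [h0]
  · intro v
    have key : μ {g : G | v ∈ e g}
        = ∑ F ∈ Finset.univ.filter (fun F : Finset V => v ∈ F), μ (S F) := by
      rw [← measure_biUnion_finset (hdisj _) (fun F _ => hSmeas F)]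
      congr 1
      ext g
      simp [S, eq_comm]
    have h1 := hlb v
    rw [key] at h1
    have h2 : ρ₀ ≤ (∑ F ∈ Finset.univ.filter (fun F : Finset V => v ∈ F), μ (S F)).toReal := by
      rw [← ENNReal.ofReal_le_iff_le_toReal (by
        exact (ENNReal.sum_lt_top.mpr (fun F _ => (hfin F).lt_top)).ne)]
      exact h1
    rw [ENNReal.toReal_sum (fun F _ => hfin F)] at h2
    rw [← Finset.sum_div]
    exact (one_le_div hρ₀).mpr h2
  · have key : (1 : ENNReal) = ∑ F : Finset V, μ (S F) := by
      rw [← measure_biUnion_finset (hdisj _) (fun F _ => hSmeas F)]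
      have : ⋃ F ∈ (Finset.univ : Finset (Finset V)), S F = Set.univ := by
        ext g; simp [S]
      rw [this, measure_univ]
    have h2 : (∑ F : Finset V, μ (S F)).toReal = 1 := by
      rw [← key]; simp
    rw [← Finset.sum_div]
    rw [← ENNReal.toReal_sum (fun F _ => hfin F)] at *
    rw [h2]
end

section
/- Let R > 1/2, let 0 < φ < π/4, let 0 < λ < 1, and set α = arcsin(λ sin φ). If 2Rλ sin(2φ) = 1 and 2R sin(φ − α) = 1, then λ² = 1/(1 + 8cos²φ). -/
/-- If `0 < φ < π/4`, `0 < λ < 1`, `α = arcsin(λ sin φ)`, and the equations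
`2Rλ sin(2φ) = 1` and `2R sin(φ - α) = 1` hold (with `R > 1/2`), then
`λ² = 1/(1 + 8cos²φ)`. -/
theorem lambda_sq_eq (R φ lam α : ℝ) (hR : 1 / 2 < R)
    (hφ0 : 0 < φ) (hφ : φ < Real.pi / 4)
    (hlam0 : 0 < lam) (hlam1 : lam < 1)
    (hα : α = Real.arcsin (lam * Real.sin φ))
    (h1 : 2 * R * lam * Real.sin (2 * φ) = 1)
    (h2 : 2 * R * Real.sin (φ - α) = 1) :
    lam ^ 2 = 1 / (1 + 8 * Real.cos φ ^ 2) := by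
  have hsφ : 0 < Real.sin φ := Real.sin_pos_of_pos_of_lt_pi hφ0 (by linarith [Real.pi_gt_three])
  have hcφ : 0 < Real.cos φ := Real.cos_pos_of_mem_Ioo ⟨by linarith [Real.pi_pos], by linarith [Real.pi_pos]⟩
  have hs1 : Real.sin φ ≤ 1 := Real.sin_le_one φ
  have hx1 : lam * Real.sin φ ≤ 1 := by nlinarith
  have hx0 : -1 ≤ lam * Real.sin φ := by nlinarith
  have hsα : Real.sin α = lam * Real.sin φ := by
    rw [hα, Real.sin_arcsin hx0 hx1]
  have hcα : Real.cos α = Real.sqrt (1 - (lam * Real.sin φ) ^ 2) := by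
    rw [hα, Real.cos_arcsin]
  have hR0 : R ≠ 0 := by linarith
  have key : lam * Real.sin (2 * φ) = Real.sin (φ - α) := by
    have := h1.trans h2.symm
    field_simp at this
    nlinarith [this, hR]
  rw [Real.sin_two_mul, Real.sin_sub, hsα, hcα] at key
  -- cancel sin φ: 3 lam cos φ = sqrt (1 - (lam sin φ)^2)
  have key2 : 3 * lam * Real.cos φ = Real.sqrt (1 - (lam * Real.sin φ) ^ 2) := by
    have h := key
    have hsne : Real.sin φ ≠ 0 := ne_of_gt hsφ
    field_simp at h ⊢
    nlinarith [h]
  have hnn : 0 ≤ 1 - (lam * Real.sin φ) ^ 2 := by nlinarith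
  have hsq : (3 * lam * Real.cos φ) ^ 2 = 1 - (lam * Real.sin φ) ^ 2 := by
    rw [key2, Real.sq_sqrt hnn]
  have hpyth := Real.sin_sq_add_cos_sq φ
  have hden : (1 : ℝ) + 8 * Real.cos φ ^ 2 > 0 := by positivity
  field_simp
  nlinarith [hsq, hpyth]
end

section
/- Let R > √5/2 and set c = 1/2 − 1/(4R²) + sqrt(1/4 − (5R² − 1)/(16R⁴)). Then 1/4 − (5R² − 1)/(16R⁴) > 0, c satisfies the equation 1 + 8c = 16R²·c·(1 − c), and 1/2 < c < 1. Consequently the angle φ = arccos(√c) satisfies 0 < φ < π/4 and 1 + 8cos²φ = 16R² sin²φ cos²φ. -/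
/-!
With `u = 1 / (4 R²)` the hypothesis `R > √5 / 2` becomes `0 < u < 1 / 5`, the radicand becomes
`(1/2 - u)² - u/4 = (1 - u)(1/4 - u)`, and `c` becomes the larger root of
`c² - (1 - 2u) c + u/4 = 0`, which is the equation `1 + 8c = 16R² c (1 - c)` divided by `16R²`.
Everything is then polynomial in `u`: `c > 1/2` amounts to `u² < (1/2 - u)² - u/4`, i.e. `u < 1/5`,
and `c < 1` to `(1/2 - u)² - u/4 < (1/2 + u)²`. For `c ∈ (1/2, 1)` the angle `φ = arccos √c`
has `cos² φ = c`, `sin² φ = 1 - c`, and `√c > √2/2 = cos (π/4)` gives `φ < π/4`.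
-/

open Real

noncomputable def phiDiscr (u : ℝ) : ℝ := (1 / 2 - u) ^ 2 - u / 4

noncomputable def phiRoot (u : ℝ) : ℝ := 1 / 2 - u + √(phiDiscr u)

section PhiRoot

variable {u : ℝ}

theorem phiDiscr_pos (hu : u < 1 / 4) : 0 < phiDiscr u := by
  unfold phiDiscr
  nlinarith

theorem mul_one_add_eight_mul_phiRoot (h : 0 ≤ phiDiscr u) :
    u * (1 + 8 * phiRoot u) = 4 * phiRoot u * (1 - phiRoot u) := by
  have hsq := sq_sqrt h
  unfold phiRoot
  unfold phiDiscr at hsq ⊢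
  linear_combination 4 * hsq

theorem half_lt_phiRoot (hu : u < 1 / 5) : 1 / 2 < phiRoot u := by
  have : u < √(phiDiscr u) := lt_sqrt_of_sq_lt (by unfold phiDiscr; linarith)
  unfold phiRoot
  linarith

theorem phiRoot_lt_one (hu : 0 < u) : phiRoot u < 1 := by
  have : √(phiDiscr u) < 1 / 2 + u :=
    (sqrt_lt' (by linarith)).2 (by unfold phiDiscr; nlinarith)
  unfold phiRoot
  linarith

end PhiRoot

section InverseSquare

variable {R : ℝ}

theorem phiDiscr_one_div_four_mul_sq (hR : R ≠ 0) :
    phiDiscr (1 / (4 * R ^ 2)) = 1 / 4 - (5 * R ^ 2 - 1) / (16 * R ^ 4) := by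
  unfold phiDiscr
  field_simp
  ring

theorem one_add_eight_mul_phiRoot_one_div_four_mul_sq (hR : R ≠ 0)
    (h : 0 ≤ phiDiscr (1 / (4 * R ^ 2))) :
    1 + 8 * phiRoot (1 / (4 * R ^ 2)) =
      16 * R ^ 2 * phiRoot (1 / (4 * R ^ 2)) * (1 - phiRoot (1 / (4 * R ^ 2))) := by
  have key := mul_one_add_eight_mul_phiRoot h
  field_simp at key
  linear_combination key

end InverseSquare

section ArccosSqrt

variable {c : ℝ}

theorem arccos_sqrt_pos (hc : c < 1) : 0 < arccos √c :=
  arccos_pos.2 ((sqrt_lt' one_pos).2 (by rwa [one_pow]))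

theorem arccos_sqrt_lt_pi_div_four (hc₀ : 1 / 2 < c) (hc₁ : c ≤ 1) : arccos √c < π / 4 := by
  have hsqrt : √2 / 2 < √c := by
    refine lt_sqrt_of_sq_lt ?_
    rw [div_pow, sq_sqrt zero_le_two]
    linarith
  calc arccos √c < arccos (√2 / 2) :=
        arccos_lt_arccos (by linarith [sqrt_nonneg 2]) hsqrt (sqrt_le_one.2 hc₁)
    _ = π / 4 := by rw [← cos_pi_div_four, arccos_cos (by positivity) (by linarith [pi_pos])]

theorem cos_arccos_sqrt_sq (hc₀ : 0 ≤ c) (hc₁ : c ≤ 1) : cos (arccos √c) ^ 2 = c := by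
  rw [cos_arccos (by linarith [sqrt_nonneg c]) (sqrt_le_one.2 hc₁), sq_sqrt hc₀]

theorem sin_arccos_sqrt_sq (hc₀ : 0 ≤ c) (hc₁ : c ≤ 1) : sin (arccos √c) ^ 2 = 1 - c := by
  rw [sin_sq, cos_arccos_sqrt_sq hc₀ hc₁]

end ArccosSqrt

/-- For `R > √5/2`, the number `c = 1/2 - 1/(4R²) + sqrt(1/4 - (5R² - 1)/(16R⁴))` is
well defined (the expression under the square root is positive), satisfies
`1 + 8c = 16R²·c·(1 - c)` and `1/2 < c < 1`; consequently `φ = arccos √c` satisfies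
`0 < φ < π/4` and `1 + 8cos²φ = 16R² sin²φ cos²φ`. -/
theorem phi_equation_solution (R c : ℝ) (hR : Real.sqrt 5 / 2 < R)
    (hc : c = 1 / 2 - 1 / (4 * R ^ 2) + Real.sqrt (1 / 4 - (5 * R ^ 2 - 1) / (16 * R ^ 4))) :
    0 < 1 / 4 - (5 * R ^ 2 - 1) / (16 * R ^ 4) ∧
    1 + 8 * c = 16 * R ^ 2 * c * (1 - c) ∧
    1 / 2 < c ∧ c < 1 ∧
    0 < Real.arccos (Real.sqrt c) ∧
    Real.arccos (Real.sqrt c) < Real.pi / 4 ∧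
    1 + 8 * Real.cos (Real.arccos (Real.sqrt c)) ^ 2 =
      16 * R ^ 2 * Real.sin (Real.arccos (Real.sqrt c)) ^ 2 *
        Real.cos (Real.arccos (Real.sqrt c)) ^ 2 := by
  have hR₀ : 0 < R := lt_trans (by positivity) hR
  have hR₁ : 5 < 4 * R ^ 2 := by nlinarith [(sqrt_lt' (by positivity)).1 (by linarith : √5 < 2 * R)]
  have hu₀ : 0 < 1 / (4 * R ^ 2) := by positivity
  have hu₁ : 1 / (4 * R ^ 2) < 1 / 5 := one_div_lt_one_div_of_lt (by norm_num) hR₁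
  have hdiscr := phiDiscr_pos (hu₁.trans (by norm_num))
  rw [← phiDiscr_one_div_four_mul_sq hR₀.ne'] at hc ⊢
  rw [← phiRoot] at hc
  subst hc
  have heq := one_add_eight_mul_phiRoot_one_div_four_mul_sq hR₀.ne' hdiscr.le
  have hc₀ := half_lt_phiRoot hu₁
  have hc₁ := phiRoot_lt_one hu₀
  refine ⟨hdiscr, heq, hc₀, hc₁, arccos_sqrt_pos hc₁, arccos_sqrt_lt_pi_div_four hc₀ hc₁.le, ?_⟩
  rw [cos_arccos_sqrt_sq (by linarith) hc₁.le, sin_arccos_sqrt_sq (by linarith) hc₁.le]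
  linear_combination heq
end

section
/- Let R > √5/2, set c = 1/2 − 1/(4R²) + sqrt(1/4 − (5R² − 1)/(16R⁴)) and λ₀ = 1/sqrt(1 + 8c). Then λ₀ > 1/3 and λ₀ > 1/(2R). -/
/-- For `R > √5/2`, with `c = 1/2 - 1/(4R²) + sqrt(1/4 - (5R² - 1)/(16R⁴))` and
`λ₀ = 1/sqrt(1 + 8c)`, one has `λ₀ > 1/3` and `λ₀ > 1/(2R)`. -/
theorem lambda_zero_bounds (R c lam₀ : ℝ) (hR : Real.sqrt 5 / 2 < R)
    (hc : c = 1 / 2 - 1 / (4 * R ^ 2) + Real.sqrt (1 / 4 - (5 * R ^ 2 - 1) / (16 * R ^ 4)))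
    (hlam : lam₀ = 1 / Real.sqrt (1 + 8 * c)) :
    1 / 3 < lam₀ ∧ 1 / (2 * R) < lam₀ := by
  have h5 : (0:ℝ) < Real.sqrt 5 := Real.sqrt_pos.mpr (by norm_num)
  have hR0 : 0 < R := by linarith
  have hsq5 : Real.sqrt 5 ^ 2 = 5 := Real.sq_sqrt (by norm_num)
  have hR2 : 5/4 < R^2 := by nlinarith [hR, h5, hsq5]
  have hR4 : 0 < R^4 := by positivity
  set s := Real.sqrt (1/4 - (5*R^2-1)/(16*R^4)) with hsdef
  have hinner : 0 ≤ 1/4 - (5*R^2-1)/(16*R^4) := by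
    rw [sub_nonneg, div_le_div_iff₀ (by positivity) (by norm_num)]
    nlinarith [mul_pos (show (0:ℝ) < 4*R^2-1 by linarith) (show (0:ℝ) < R^2-1 by nlinarith)]
  have hs0 : 0 ≤ s := Real.sqrt_nonneg _
  have hs2 : s^2 = 1/4 - (5*R^2-1)/(16*R^4) := Real.sq_sqrt hinner
  have hs16 : 16*R^4*s^2 = 4*R^4 - 5*R^2 + 1 := by
    rw [hs2]; field_simp; ring
  have hshalf : s ≤ 1/2 := by
    have h14 : (1:ℝ)/4 - (5*R^2-1)/(16*R^4) ≤ 1/4 := by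
      have : 0 ≤ (5*R^2-1)/(16*R^4) := div_nonneg (by nlinarith) (by positivity)
      linarith
    calc s ≤ Real.sqrt (1/4) := Real.sqrt_le_sqrt h14
    _ = 1/2 := by
      rw [show (1/4:ℝ) = (1/2)^2 by norm_num, Real.sqrt_sq (by norm_num)]
  have hcform : c = 1/2 - 1/(4*R^2) + s := hc
  clear_value s
  clear hsdef hs2 hinner hc
  have hRdiv : 1/(4*R^2) < 1/5 := by
    rw [div_lt_div_iff₀ (by positivity) (by norm_num)]; linarith
  have hRdiv0 : 0 < 1/(4*R^2) := by positivity
  have hc0 : 0 < c := by rw [hcform]; linarith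
  have h8c : 0 < 1 + 8*c := by linarith
  have hsqrtpos : 0 < Real.sqrt (1+8*c) := Real.sqrt_pos.mpr h8c
  have hc1 : c < 1 := by rw [hcform]; linarith
  constructor
  · have hlt3 : Real.sqrt (1+8*c) < 3 := by
      rw [Real.sqrt_lt' (by norm_num)]; nlinarith [hc1]
    rw [hlam]
    exact one_div_lt_one_div_of_lt hsqrtpos hlt3
  · have ht2 : (8*s*R^2)^2 = 16*R^4 - 20*R^2 + 4 := by linear_combination 4*hs16
    have hA : 0 < 4*R^4 - 5*R^2 := by
      nlinarith [mul_pos (show (0:ℝ) < R^2 by positivity)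
        (show (0:ℝ) < 4*R^2-5 by linarith)]
    have hsq2 : (8*s*R^2)^2 < (4*R^4 - 5*R^2 + 2)^2 := by
      nlinarith [ht2, mul_pos hA hA]
    have key : 8*s*R^2 < 4*R^4 - 5*R^2 + 2 :=
      lt_of_pow_lt_pow_left₀ 2 (by linarith) hsq2
    have hlt : Real.sqrt (1+8*c) < 2*R := by
      rw [Real.sqrt_lt' (by positivity), hcform]
      have hpos2 : 0 < (4*R^4 - 5*R^2 + 2 - 8*s*R^2)/R^2 :=
        div_pos (by linarith) (by positivity)
      have heq : (2*R)^2 - (1 + 8*(1/2 - 1/(4*R^2) + s))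
          = (4*R^4 - 5*R^2 + 2 - 8*s*R^2)/R^2 := by
        field_simp; ring
      linarith
    rw [hlam]
    exact one_div_lt_one_div_of_lt hsqrtpos hlt
end

section
/- Let n ≥ 1, R > 0, 0 < λ < 1 and 0 < s < 1, and let Ω ⊆ ℝ^n be a measurable set contained in the closed ball of radius Rλs centered at the origin. Then ∫_{λ^{-1}·Ω} R/sqrt(R² − ‖x‖²) dx ≤ λ^{-n} · sqrt((1 − λ²s²)/(1 − s²)) · ∫_{Ω} R/sqrt(R² − ‖x‖²) dx, where λ^{-1}·Ω = {x/λ : x ∈ Ω} and the integrals are with respect to Lebesgue measure on ℝ^n. -/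
set_option maxHeartbeats 1000000

open MeasureTheory Pointwise

/-- Change-of-variables density bound: if `Ω ⊆ ℝ^n` is a measurable set contained in the
closed ball of radius `Rλs` (with `0 < λ < 1`, `0 < s < 1`, `R > 0`), then the integral
of the spherical area element `R/sqrt(R² - ‖x‖²)` over `λ⁻¹·Ω` is at most
`λ^{-n}·sqrt((1 - λ²s²)/(1 - s²))` times its integral over `Ω`. -/
theorem dilated_cap_integral_bound (n : ℕ) (hn : 1 ≤ n) (R lam s : ℝ) (hR : 0 < R)
    (hlam0 : 0 < lam) (hlam1 : lam < 1) (hs0 : 0 < s) (hs1 : s < 1)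
    (Ω : Set (EuclideanSpace ℝ (Fin n))) (hΩmeas : MeasurableSet Ω)
    (hΩ : Ω ⊆ Metric.closedBall (0 : EuclideanSpace ℝ (Fin n)) (R * lam * s)) :
    ∫ x in (fun x : EuclideanSpace ℝ (Fin n) => lam⁻¹ • x) '' Ω,
        R / Real.sqrt (R ^ 2 - ‖x‖ ^ 2) ≤
      lam⁻¹ ^ n * Real.sqrt ((1 - lam ^ 2 * s ^ 2) / (1 - s ^ 2)) *
        ∫ x in Ω, R / Real.sqrt (R ^ 2 - ‖x‖ ^ 2) := by
  have hli : (0:ℝ) < lam⁻¹ := inv_pos.2 hlam0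
  have hden : (0:ℝ) < 1 - s ^ 2 := by nlinarith
  have hnum : (0:ℝ) < 1 - lam ^ 2 * s ^ 2 := by nlinarith
  set C : ℝ := Real.sqrt ((1 - lam ^ 2 * s ^ 2) / (1 - s ^ 2)) with hC
  have hCpos : 0 < C := Real.sqrt_pos.2 (div_pos hnum hden)
  have himg : (fun x : EuclideanSpace ℝ (Fin n) => lam⁻¹ • x) '' Ω = lam⁻¹ • Ω := by
    rw [← Set.image_smul]
  have hcs := Measure.setIntegral_comp_smul_of_pos (E := EuclideanSpace ℝ (Fin n)) volume
      (fun x => R / Real.sqrt (R ^ 2 - ‖x‖ ^ 2)) Ω hli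
  rw [finrank_euclideanSpace_fin (𝕜 := ℝ), smul_eq_mul] at hcs
  have hcov : ∫ x in lam⁻¹ • Ω, R / Real.sqrt (R ^ 2 - ‖x‖ ^ 2)
      = lam⁻¹ ^ n * ∫ x in Ω, R / Real.sqrt (R ^ 2 - ‖lam⁻¹ • x‖ ^ 2) := by
    have hpn : (0:ℝ) < lam⁻¹ ^ n := pow_pos hli n
    rw [hcs, ← mul_assoc, mul_inv_cancel₀ hpn.ne', one_mul]
  rw [himg, hcov, mul_assoc]
  apply mul_le_mul_of_nonneg_left _ (le_of_lt (pow_pos hli n))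
  rw [← integral_const_mul]
  -- integrability of the RHS integrand on Ω
  have hgint : IntegrableOn (fun x : EuclideanSpace ℝ (Fin n) =>
      R / Real.sqrt (R ^ 2 - ‖x‖ ^ 2)) Ω := by
    have hcont : ContinuousOn (fun x : EuclideanSpace ℝ (Fin n) =>
        R / Real.sqrt (R ^ 2 - ‖x‖ ^ 2))
        (Metric.closedBall (0 : EuclideanSpace ℝ (Fin n)) (R * lam * s)) := by
      apply ContinuousOn.div continuousOn_const
      · exact (Real.continuous_sqrt.comp
          (continuous_const.sub ((continuous_norm).pow 2))).continuousOn
      · intro x hx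
        have hx' : ‖x‖ ≤ R * lam * s := by
          simpa using Metric.mem_closedBall.1 hx
        have h1 : lam * s < 1 := by nlinarith [mul_pos hs0 (sub_pos.2 hlam1)]
        have hRR : R * lam * s < R := by nlinarith
        have : (0:ℝ) < R ^ 2 - ‖x‖ ^ 2 := by nlinarith [norm_nonneg x]
        exact ne_of_gt (Real.sqrt_pos.2 this)
    exact (hcont.integrableOn_compact (isCompact_closedBall _ _)).mono_set hΩ
  apply integral_mono_of_nonneg
  · filter_upwards with x
    positivity
  · exact hgint.const_mul _
  · rw [Filter.EventuallyLE, ae_restrict_iff' hΩmeas]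
    filter_upwards with x hx
    have hx' : ‖x‖ ≤ R * lam * s := by
      simpa using Metric.mem_closedBall.1 (hΩ hx)
    have hnx : (0:ℝ) ≤ ‖x‖ := norm_nonneg x
    have h1' : lam * s < 1 := by nlinarith [mul_pos hs0 (sub_pos.2 hlam1)]
    have hRR' : R * lam * s < R := by nlinarith [mul_pos hR (sub_pos.2 h1')]
    have hb : (0:ℝ) < R ^ 2 - ‖x‖ ^ 2 := by nlinarith
    have hnsm : ‖lam⁻¹ • x‖ = lam⁻¹ * ‖x‖ := by
      rw [norm_smul, Real.norm_eq_abs, abs_of_pos hli]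
    have ha : (0:ℝ) < R ^ 2 - ‖lam⁻¹ • x‖ ^ 2 := by
      rw [hnsm]
      have h1 : lam⁻¹ * ‖x‖ ≤ R * s := by
        calc lam⁻¹ * ‖x‖ ≤ lam⁻¹ * (R * lam * s) :=
              mul_le_mul_of_nonneg_left hx' (le_of_lt hli)
          _ = R * s := by field_simp
      nlinarith [mul_nonneg (le_of_lt hli) hnx]
    -- key inequality
    have hkey : R ^ 2 - ‖x‖ ^ 2 ≤
        (1 - lam ^ 2 * s ^ 2) / (1 - s ^ 2) * (R ^ 2 - ‖lam⁻¹ • x‖ ^ 2) := by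
      rw [hnsm]
      have hl2 : (0:ℝ) < lam ^ 2 := by positivity
      have hrepr : R ^ 2 - (lam⁻¹ * ‖x‖) ^ 2
          = (R ^ 2 * lam ^ 2 - ‖x‖ ^ 2) / lam ^ 2 := by
        field_simp
      rw [hrepr, div_mul_div_comm, le_div_iff₀ (by positivity)]
      have hprod : (0:ℝ) ≤ (1 - lam ^ 2) * ((R * lam * s) ^ 2 - ‖x‖ ^ 2) := by
        apply mul_nonneg (by nlinarith)
        nlinarith
      nlinarith
    have hsb : Real.sqrt (R ^ 2 - ‖x‖ ^ 2)
        ≤ C * Real.sqrt (R ^ 2 - ‖lam⁻¹ • x‖ ^ 2) := by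
      rw [hC, ← Real.sqrt_mul (le_of_lt (div_pos hnum hden))]
      exact Real.sqrt_le_sqrt hkey
    have hfb : R / Real.sqrt (R ^ 2 - ‖lam⁻¹ • x‖ ^ 2)
        ≤ C * (R / Real.sqrt (R ^ 2 - ‖x‖ ^ 2)) := by
      rw [mul_div_assoc']
      rw [div_le_div_iff₀ (Real.sqrt_pos.2 ha) (Real.sqrt_pos.2 hb)]
      calc R * Real.sqrt (R ^ 2 - ‖x‖ ^ 2)
          ≤ R * (C * Real.sqrt (R ^ 2 - ‖lam⁻¹ • x‖ ^ 2)) :=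
            mul_le_mul_of_nonneg_left hsb (le_of_lt hR)
        _ = C * R * Real.sqrt (R ^ 2 - ‖lam⁻¹ • x‖ ^ 2) := by ring
    exact hfb
end

section
/- Let 0 < c < 1. The function f(φ) = sqrt(1 − c² sin²φ) − c · cos φ is strictly increasing on the interval (0, π/2). -/
/-- For `0 < c < 1`, the function `f(φ) = sqrt(1 - c² sin²φ) - c cos φ` is strictly
increasing on the interval `(0, π/2)`. -/
theorem strictMono_sin_ratio (c : ℝ) (hc0 : 0 < c) (hc1 : c < 1) :
    StrictMonoOn
      (fun φ : ℝ => Real.sqrt (1 - c ^ 2 * Real.sin φ ^ 2) - c * Real.cos φ)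
      (Set.Ioo 0 (Real.pi / 2)) := by
  have hc2 : c ^ 2 < 1 := by nlinarith
  intro x hx y hy hxy
  obtain ⟨hx0, hx2⟩ := hx
  obtain ⟨hy0, hy2⟩ := hy
  have hpi := Real.pi_pos
  -- basic trig facts
  have hcosx : 0 < Real.cos x := Real.cos_pos_of_mem_Ioo ⟨by linarith, hx2⟩
  have hcosy : 0 < Real.cos y := Real.cos_pos_of_mem_Ioo ⟨by linarith, hy2⟩
  have hsinx : 0 < Real.sin x := Real.sin_pos_of_pos_of_lt_pi hx0 (by linarith)
  have hsxy : Real.sin x < Real.sin y :=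
    Real.strictMonoOn_sin ⟨by linarith, le_of_lt hx2⟩ ⟨by linarith, le_of_lt hy2⟩ hxy
  have hcxy : Real.cos y < Real.cos x :=
    Real.strictAntiOn_cos ⟨le_of_lt hx0, by linarith⟩ ⟨by linarith, by linarith⟩ hxy
  have hsiny1 : Real.sin y ≤ 1 := Real.sin_le_one y
  -- positivity of the arguments of sqrt
  have hsiny : 0 < Real.sin y := lt_trans hsinx hsxy
  have hAy : 0 < 1 - c ^ 2 * Real.sin y ^ 2 := by nlinarith [mul_le_mul_of_nonneg_left (Real.sin_sq_le_one y) (sq_nonneg c)]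
  have hsinx1 : Real.sin x ≤ 1 := Real.sin_le_one x
  have hAx : 0 < 1 - c ^ 2 * Real.sin x ^ 2 := by nlinarith [mul_le_mul_of_nonneg_left (Real.sin_sq_le_one x) (sq_nonneg c)]
  -- key identity: f φ = (1 - c²)/(√(1 - c² sin²φ) + c cos φ)
  have key : ∀ φ : ℝ, 0 < 1 - c ^ 2 * Real.sin φ ^ 2 → 0 < Real.cos φ →
      Real.sqrt (1 - c ^ 2 * Real.sin φ ^ 2) - c * Real.cos φ
        = (1 - c ^ 2) / (Real.sqrt (1 - c ^ 2 * Real.sin φ ^ 2) + c * Real.cos φ) := by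
    intro φ hA hcos
    have hs : 0 < Real.sqrt (1 - c ^ 2 * Real.sin φ ^ 2) := Real.sqrt_pos.mpr hA
    have hden : 0 < Real.sqrt (1 - c ^ 2 * Real.sin φ ^ 2) + c * Real.cos φ := by positivity
    rw [eq_div_iff (ne_of_gt hden)]
    have hsq : Real.sqrt (1 - c ^ 2 * Real.sin φ ^ 2) ^ 2 = 1 - c ^ 2 * Real.sin φ ^ 2 :=
      Real.sq_sqrt hA.le
    have hpyth : Real.sin φ ^ 2 + Real.cos φ ^ 2 = 1 := Real.sin_sq_add_cos_sq φ
    have h1 : (Real.sqrt (1 - c ^ 2 * Real.sin φ ^ 2) - c * Real.cos φ)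
        * (Real.sqrt (1 - c ^ 2 * Real.sin φ ^ 2) + c * Real.cos φ)
        = Real.sqrt (1 - c ^ 2 * Real.sin φ ^ 2) ^ 2 - c ^ 2 * Real.cos φ ^ 2 := by ring
    rw [h1, hsq]
    linear_combination (-(c ^ 2)) * hpyth
  simp only []
  rw [key x hAx hcosx, key y hAy hcosy]
  have hgy_lt : Real.sqrt (1 - c ^ 2 * Real.sin y ^ 2) + c * Real.cos y
      < Real.sqrt (1 - c ^ 2 * Real.sin x ^ 2) + c * Real.cos x := by
    have h1 : Real.sqrt (1 - c ^ 2 * Real.sin y ^ 2) < Real.sqrt (1 - c ^ 2 * Real.sin x ^ 2) := by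
      apply Real.sqrt_lt_sqrt hAy.le
      have hs2 : Real.sin x ^ 2 < Real.sin y ^ 2 := by
        apply pow_lt_pow_left₀ hsxy hsinx.le
        norm_num
      have hc2p : (0:ℝ) < c ^ 2 := by positivity
      nlinarith [mul_lt_mul_of_pos_left hs2 hc2p]
    nlinarith
  have hgy : 0 < Real.sqrt (1 - c ^ 2 * Real.sin y ^ 2) + c * Real.cos y := by
    have := Real.sqrt_nonneg (1 - c ^ 2 * Real.sin y ^ 2); positivity
  exact div_lt_div_of_pos_left (by nlinarith) hgy hgy_lt
end

section
/- For all R with √5/2 < R, one has x(R) < 3; and for all R with √5/2 < R < 3/2, one has x(R) < 2R, where x(R) = sqrt(5 − 2/R² + 4·sqrt(1 − (5R² − 1)/(4R⁴))). -/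
/-- For all `R > √5/2` one has
`x(R) = sqrt(5 - 2/R² + 4·sqrt(1 - (5R² - 1)/(4R⁴))) < 3`, and for `√5/2 < R < 3/2`
one moreover has `x(R) < 2R`. -/
theorem xval_lt_three_and_lt_two_R :
    (∀ R : ℝ, Real.sqrt 5 / 2 < R →
      Real.sqrt (5 - 2 / R ^ 2 + 4 * Real.sqrt (1 - (5 * R ^ 2 - 1) / (4 * R ^ 4))) < 3) ∧
    (∀ R : ℝ, Real.sqrt 5 / 2 < R → R < 3 / 2 →
      Real.sqrt (5 - 2 / R ^ 2 + 4 * Real.sqrt (1 - (5 * R ^ 2 - 1) / (4 * R ^ 4))) < 2 * R) := by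
  have h5 : (Real.sqrt 5) ^ 2 = 5 := Real.sq_sqrt (by norm_num)
  have hpos : 0 < Real.sqrt 5 / 2 := by positivity
  constructor
  · intro R hR
    have hR0 : 0 < R := lt_trans hpos hR
    have ht : 5 / 4 < R ^ 2 := by nlinarith [Real.sqrt_nonneg 5]
    have he : 0 < (5 * R ^ 2 - 1) / (4 * R ^ 4) := by
      apply div_pos (by nlinarith) (by positivity)
    have hs : Real.sqrt (1 - (5 * R ^ 2 - 1) / (4 * R ^ 4)) < 1 := by
      rw [Real.sqrt_lt' (by norm_num : (0:ℝ) < 1)]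
      linarith
    rw [Real.sqrt_lt' (by norm_num : (0:ℝ) < 3)]
    have h2 : 0 < 2 / R ^ 2 := by positivity
    nlinarith
  · intro R hR hR2
    have hR0 : 0 < R := lt_trans hpos hR
    have ht : 5 / 4 < R ^ 2 := by nlinarith [Real.sqrt_nonneg 5]
    have hB : 0 < (4 * R ^ 4 - 5 * R ^ 2 + 2) / (4 * R ^ 2) := by
      apply div_pos (by nlinarith [sq_nonneg (2 * R ^ 2 - 5 / 4)]) (by positivity)
    have hs : Real.sqrt (1 - (5 * R ^ 2 - 1) / (4 * R ^ 4)) <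
        (4 * R ^ 4 - 5 * R ^ 2 + 2) / (4 * R ^ 2) := by
      rw [Real.sqrt_lt' hB]
      have hx : 1 - (5 * R ^ 2 - 1) / (4 * R ^ 4) =
          (4 * R ^ 4 - 5 * R ^ 2 + 1) / (4 * R ^ 4) := by
        field_simp
        ring
      rw [hx, div_pow, div_lt_div_iff₀ (by positivity) (by positivity)]
      have h1 : 0 < 4 * R ^ 2 - 5 := by nlinarith
      nlinarith [mul_pos (pow_pos hR0 8) (pow_pos h1 2)]
    rw [Real.sqrt_lt' (by positivity : (0:ℝ) < 2 * R)]
    have key : 4 * ((4 * R ^ 4 - 5 * R ^ 2 + 2) / (4 * R ^ 2)) =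
        4 * R ^ 2 - 5 + 2 / R ^ 2 := by
      field_simp
    have h2 : 5 - 2 / R ^ 2 + 4 * ((4 * R ^ 4 - 5 * R ^ 2 + 2) / (4 * R ^ 2)) = 4 * R ^ 2 := by
      rw [key]; ring
    have : (2 * R) ^ 2 = 4 * R ^ 2 := by ring
    rw [this]
    linarith
end
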